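/- arXiv:math/0009218 — 5 statements merged into one kernel-verified Lean document; each statement's English description precedes it below -/
import Mathlib

section
/- Let α, β > 0, S₁ = α+β+1, S₂ = αβ+α+β, θ = 144(1 − 3S₂/S₁²), λ₁ = 3/2 + (1/2)√(13+√θ) and λ₂ = 3/2 + (1/2)√(13−√θ). Then it is impossible that λ₁, λ₂, 3−λ₁ and 3−λ₂ are all integers. -/
/-! Since `α, β > 0`, the quotient `3 S₂ / S₁²` is positive, so `θ < 144` and `√θ ∈ [0, 12)`.
Hence `13 + √θ ∈ [13, 25)`, its square root lies strictly between `3` and `5`, and `λ₁` lies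
strictly between `3` and `4`: it is not even an integer. -/

lemma lagrange_theta_lt_144 {α β : ℝ} (hα : 0 < α) (hβ : 0 < β) :
    144 * (1 - 3 * (α * β + α + β) / (α + β + 1) ^ 2) < 144 := by
  have : 0 < 3 * (α * β + α + β) / (α + β + 1) ^ 2 := by positivity
  linarith

lemma three_halves_add_half_sqrt_mem_Ioo {θ : ℝ} (hθ : θ < 144) :
    3 / 2 + (1 / 2) * √(13 + √θ) ∈ Set.Ioo (3 : ℝ) 4 := by
  have hs : √θ < 12 := (Real.sqrt_lt' (by norm_num)).2 (by linarith)
  have hlo : 3 < √(13 + √θ) := (Real.lt_sqrt (by norm_num)).2 (by linarith [Real.sqrt_nonneg θ])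
  have hhi : √(13 + √θ) < 5 := (Real.sqrt_lt' (by norm_num)).2 (by linarith)
  constructor <;> linarith

theorem stmt_2_general (α β : ℝ) (hα : 0 < α) (hβ : 0 < β)
    (S₁ S₂ θ l₁ l₂ : ℝ) (hS₁ : S₁ = α + β + 1) (hS₂ : S₂ = α * β + α + β)
    (hθ : θ = 144 * (1 - 3 * S₂ / S₁ ^ 2))
    (hl₁ : l₁ = 3 / 2 + (1 / 2) * Real.sqrt (13 + Real.sqrt θ)) :
    ¬ ∃ n₁ n₂ n₃ n₄ : ℤ, l₁ = (n₁ : ℝ) ∧ l₂ = (n₂ : ℝ) ∧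
      3 - l₁ = (n₃ : ℝ) ∧ 3 - l₂ = (n₄ : ℝ) := by
  rintro ⟨n₁, -, -, -, hn₁, -⟩
  have hθ_lt : θ < 144 := by
    rw [hθ, hS₁, hS₂]
    exact lagrange_theta_lt_144 hα hβ
  obtain ⟨hlo, hhi⟩ : (n₁ : ℝ) ∈ Set.Ioo 3 4 := by
    rw [← hn₁, hl₁]
    exact three_halves_add_half_sqrt_mem_Ioo hθ_lt
  have : (3 : ℤ) < n₁ := by exact_mod_cast hlo
  have : n₁ < (4 : ℤ) := by exact_mod_cast hhi
  omega

theorem stmt_2 (α β : ℝ) (hα : 0 < α) (hβ : 0 < β)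
    (S₁ S₂ θ l₁ l₂ : ℝ) (hS₁ : S₁ = α + β + 1) (hS₂ : S₂ = α * β + α + β)
    (hθ : θ = 144 * (1 - 3 * S₂ / S₁ ^ 2))
    (hl₁ : l₁ = 3 / 2 + (1 / 2) * Real.sqrt (13 + Real.sqrt θ))
    (hl₂ : l₂ = 3 / 2 + (1 / 2) * Real.sqrt (13 - Real.sqrt θ)) :
    ¬ ∃ n₁ n₂ n₃ n₄ : ℤ, l₁ = (n₁ : ℝ) ∧ l₂ = (n₂ : ℝ) ∧
      3 - l₁ = (n₃ : ℝ) ∧ 3 - l₂ = (n₄ : ℝ) :=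
  stmt_2_general α β hα hβ S₁ S₂ θ l₁ l₂ hS₁ hS₂ hθ hl₁
end

section
/- Let p be a polynomial in 4 variables over ℂ and D the 4×4 matrix with D₁₂ = D₃₄ = 1 and other entries 0. If p(x + nDx) = p(x) for all natural numbers n and all x ∈ ℂ⁴, then the directional derivative x₂ ∂p/∂x₁ + x₄ ∂p/∂x₃ vanishes identically. -/
open MvPolynomial

open scoped Matrix

/-!
For fixed `x` and `v`, `t ↦ p (x + t v)` is a polynomial in `t` with constant term `p x` and
linear coefficient `∑ᵢ vᵢ ∂ᵢp (x)`. If it takes the value `p x` at every natural number, it is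
constant, so its linear coefficient vanishes. With `v = D x` this coefficient is the value at `x`
of the derivation `δ = ∑ᵢ (D X)ᵢ ∂ᵢ` (`linearDeriv D`), which is therefore zero as a polynomial.
-/

namespace MvPolynomial

section Taylor

variable {σ R : Type*} [CommRing R]

theorem eval_aeval_C_add_X_mul_C (x v : σ → R) (t : R) (p : MvPolynomial σ R) :
    (aeval (fun i => Polynomial.C (x i) + Polynomial.X * Polynomial.C (v i)) p).eval t =
      eval (fun i => x i + t * v i) p := by
  rw [← Polynomial.coe_aeval_eq_eval, ← AlgHom.comp_apply, comp_aeval, aeval_eq_eval]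
  simp only [map_add, map_mul, Polynomial.aeval_X, Polynomial.aeval_C, Algebra.algebraMap_self,
    RingHom.id_apply]

theorem coeff_zero_aeval_C_add_X_mul_C (x v : σ → R) (p : MvPolynomial σ R) :
    (aeval (fun i => Polynomial.C (x i) + Polynomial.X * Polynomial.C (v i)) p).coeff 0 =
      eval x p := by
  simp only [Polynomial.coeff_zero_eq_eval_zero, eval_aeval_C_add_X_mul_C, zero_mul, add_zero]

theorem coeff_one_aeval_C_add_X_mul_C [Fintype σ] (x v : σ → R) (p : MvPolynomial σ R) :
    (aeval (fun i => Polynomial.C (x i) + Polynomial.X * Polynomial.C (v i)) p).coeff 1 =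
      ∑ i, v i * eval x (pderiv i p) := by
  induction p using MvPolynomial.induction_on with
  | C a => simp
  | add p q hp hq =>
    simp only [map_add, Polynomial.coeff_add, hp, hq, ← Finset.sum_add_distrib, mul_add]
  | mul_X p j hp =>
    have hcoeff (a : Polynomial R) (c d : R) :
        (a * (Polynomial.C c + Polynomial.X * Polynomial.C d)).coeff 1 =
          a.coeff 1 * c + a.coeff 0 * d := by
      rw [mul_add, ← mul_assoc, Polynomial.coeff_add, Polynomial.coeff_mul_C,
        Polynomial.coeff_mul_C, Polynomial.coeff_mul_X]
    classical
    rw [map_mul, aeval_X, hcoeff, hp, coeff_zero_aeval_C_add_X_mul_C]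
    simp only [Derivation.leibniz, pderiv_X, smul_eq_mul, map_add, map_mul, eval_X,
      Pi.single_apply, mul_add, Finset.sum_add_distrib, Finset.sum_mul]
    rw [add_comm]
    congr 1
    · simp [mul_comm]
    · exact Finset.sum_congr rfl fun i _ => by ring

theorem sum_mul_eval_pderiv_eq_zero_of_eval_add_natCast_mul [Fintype σ] [IsDomain R]
    [CharZero R] {p : MvPolynomial σ R} {x v : σ → R}
    (h : ∀ n : ℕ, eval (fun i => x i + n * v i) p = eval x p) :
    ∑ i, v i * eval x (pderiv i p) = 0 := by
  have hq : aeval (fun i => Polynomial.C (x i) + Polynomial.X * Polynomial.C (v i)) p =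
      Polynomial.C (eval x p) := by
    refine Polynomial.eq_of_infinite_eval_eq _ _ <|
      (Set.infinite_range_of_injective Nat.cast_injective).mono ?_
    rintro _ ⟨n, rfl⟩
    simp only [Set.mem_ofPred_eq, eval_aeval_C_add_X_mul_C, h, Polynomial.eval_C]
  rw [← coeff_one_aeval_C_add_X_mul_C, hq, Polynomial.coeff_C_of_ne_zero one_ne_zero]

end Taylor

section LinearVectorField

variable {σ R : Type*} [Fintype σ] [CommRing R]

noncomputable def linearDeriv (D : Matrix σ σ R) (p : MvPolynomial σ R) : MvPolynomial σ R :=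
  ∑ i, (D.map C *ᵥ X) i * pderiv i p

theorem eval_linearDeriv (D : Matrix σ σ R) (p : MvPolynomial σ R) (x : σ → R) :
    eval x (linearDeriv D p) = ∑ i, (D *ᵥ x) i * eval x (pderiv i p) := by
  simp [linearDeriv, RingHom.map_mulVec, Function.comp_def]

theorem linearDeriv_eq_zero_of_eval_add_natCast_mul_mulVec [IsDomain R] [CharZero R]
    {D : Matrix σ σ R} {p : MvPolynomial σ R}
    (h : ∀ (n : ℕ) (x : σ → R), eval (fun i => x i + n * (D *ᵥ x) i) p = eval x p) :
    linearDeriv D p = 0 :=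
  funext fun x => by
    rw [eval_linearDeriv, map_zero]
    exact sum_mul_eval_pderiv_eq_zero_of_eval_add_natCast_mul (h · x)

end LinearVectorField

end MvPolynomial

theorem stmt_8 (p : MvPolynomial (Fin 4) ℂ)
    (D : Matrix (Fin 4) (Fin 4) ℂ)
    (hD : D = !![0, 1, 0, 0; 0, 0, 0, 0; 0, 0, 0, 1; 0, 0, 0, 0])
    (hinv : ∀ (n : ℕ) (x : Fin 4 → ℂ),
      eval (fun i => x i + (n : ℂ) * D.mulVec x i) p = eval x p) :
    X 1 * pderiv 0 p + X 3 * pderiv 2 p = 0 := by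
  have hδ : linearDeriv D p = X 1 * pderiv 0 p + X 3 * pderiv 2 p := by
    simp [linearDeriv, hD, Fin.sum_univ_four, Matrix.mulVec, dotProduct]
  rw [← hδ]
  exact linearDeriv_eq_zero_of_eval_add_natCast_mul_mulVec hinv
end

section
/- Let P₁ = −2(b₂ + d₄ + ε₁), P₂ = 3b₂ε₁ − 2ζ₁ζ₂ + 3ε₁d₄ + 4b₂d₄ + b₂² + ε₁² + d₄², P₃ = −(d₄ + b₂ + ε₁)(2b₂d₄ + b₂ε₁ + d₄ε₁ − 2ζ₁ζ₂), and P₄ = (b₂d₄ − ζ₁ζ₂)(b₂d₄ + b₂ε₁ + d₄ε₁ − ζ₁ζ₂ + ε₁²), with b₂, d₄, ε₁, ζ₁, ζ₂ ∈ ℂ. If P₁ = P₂ = P₃ = P₄ = 0, then ε₁ = 0, d₄ = −b₂, and b₂² + ζ₁ζ₂ = 0. -/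
/-! Solving `P₁ = 0` for `d₄` and `P₂ = 0` for `ζ₁ζ₂` makes both factors of `P₄` equal to `ε₁² / 2`,
so `P₄ = ε₁⁴ / 4` and `ε₁ = 0`; the remaining two equations then read off directly. -/

theorem stmt_14_general (b₂ d₄ ε₁ ζ₁ ζ₂ : ℂ)
    (h₁ : -2 * (b₂ + d₄ + ε₁) = 0)
    (h₂ : 3 * b₂ * ε₁ - 2 * ζ₁ * ζ₂ + 3 * ε₁ * d₄ + 4 * b₂ * d₄ + b₂ ^ 2 + ε₁ ^ 2 + d₄ ^ 2 = 0)
    (h₄ : (b₂ * d₄ - ζ₁ * ζ₂) * (b₂ * d₄ + b₂ * ε₁ + d₄ * ε₁ - ζ₁ * ζ₂ + ε₁ ^ 2) = 0) :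
    ε₁ = 0 ∧ d₄ = -b₂ ∧ b₂ ^ 2 + ζ₁ * ζ₂ = 0 := by
  obtain rfl : d₄ = -b₂ - ε₁ := by linear_combination (-1 / 2 : ℂ) * h₁
  have hζ : ζ₁ * ζ₂ = -b₂ ^ 2 - b₂ * ε₁ - ε₁ ^ 2 / 2 := by linear_combination (-1 / 2 : ℂ) * h₂
  have hfactor₁ : b₂ * (-b₂ - ε₁) - ζ₁ * ζ₂ = ε₁ ^ 2 / 2 := by linear_combination -hζ
  have hfactor₂ : b₂ * (-b₂ - ε₁) + b₂ * ε₁ + (-b₂ - ε₁) * ε₁ - ζ₁ * ζ₂ + ε₁ ^ 2 = ε₁ ^ 2 / 2 := by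
    linear_combination -hζ
  rw [hfactor₁, hfactor₂] at h₄
  obtain rfl : ε₁ = 0 := by simpa using h₄
  exact ⟨rfl, by ring, by linear_combination hζ⟩

theorem stmt_14 (b₂ d₄ ε₁ ζ₁ ζ₂ : ℂ)
    (h₁ : -2 * (b₂ + d₄ + ε₁) = 0)
    (h₂ : 3 * b₂ * ε₁ - 2 * ζ₁ * ζ₂ + 3 * ε₁ * d₄ + 4 * b₂ * d₄ + b₂ ^ 2 + ε₁ ^ 2 + d₄ ^ 2 = 0)
    (h₃ : -((d₄ + b₂ + ε₁) * (2 * b₂ * d₄ + b₂ * ε₁ + d₄ * ε₁ - 2 * ζ₁ * ζ₂)) = 0)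
    (h₄ : (b₂ * d₄ - ζ₁ * ζ₂) * (b₂ * d₄ + b₂ * ε₁ + d₄ * ε₁ - ζ₁ * ζ₂ + ε₁ ^ 2) = 0) :
    ε₁ = 0 ∧ d₄ = -b₂ ∧ b₂ ^ 2 + ζ₁ * ζ₂ = 0 :=
  stmt_14_general b₂ d₄ ε₁ ζ₁ ζ₂ h₁ h₂ h₄
end

section
/- Let η₁, ζ₁, ζ₂, a₂, a₄, c₂, c₄ ∈ ℂ satisfy η₁² + ζ₁ζ₂ = 0. Let T₁ be the 4×4 matrix with rows (1,1,0,0), (0,1,0,0), (0,0,1,1), (0,0,0,1), and let T₂ be the 4×4 matrix with rows (η₁+1, a₂, ζ₂, a₄), (0, η₁+1, 0, ζ₂), (ζ₁, c₂, 1−η₁, c₄), (0, ζ₁, 0, 1−η₁). Then all eigenvalues of T₁T₂ equal 1, i.e., the characteristic polynomial of T₁T₂ is (λ − 1)⁴. -/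
/-!
Reorder the standard basis of `ℂ⁴` as `(e₀, e₂ | e₁, e₃)`. Then `T₁ = [[1, 1], [0, 1]]` and
`T₂ = [[A, B], [0, A]]` in 2×2 blocks, with `A = [[η₁ + 1, ζ₂], [ζ₁, 1 - η₁]]`, so `T₁ T₂` is block
upper triangular with both diagonal blocks equal to `A`. Since `tr A = 2` and
`det A = 1 - (η₁² + ζ₁ ζ₂) = 1`, the characteristic polynomial of `A` is `(X - 1)²`, and that of
`T₁ T₂` is its square.
-/

open Polynomial Matrix

lemma Matrix.charpoly_eq_X_sub_one_sq {R : Type*} [CommRing R] [Nontrivial R]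
    {M : Matrix (Fin 2) (Fin 2) R} (htrace : M.trace = 2) (hdet : M.det = 1) :
    M.charpoly = (X - 1) ^ 2 := by
  rw [charpoly_fin_two, htrace, hdet, map_ofNat, map_one]
  ring

-- `inl i ↦ 2 i` and `inr i ↦ 2 i + 1`
def Fin.interleave : Fin 2 ⊕ Fin 2 ≃ Fin 4 := finSumFinEquiv.trans (Equiv.swap 1 2)

lemma Matrix.submatrix_interleave {α : Type*}
    (m₀₀ m₀₁ m₀₂ m₀₃ m₁₀ m₁₁ m₁₂ m₁₃ m₂₀ m₂₁ m₂₂ m₂₃ m₃₀ m₃₁ m₃₂ m₃₃ : α) :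
    (!![m₀₀, m₀₁, m₀₂, m₀₃; m₁₀, m₁₁, m₁₂, m₁₃; m₂₀, m₂₁, m₂₂, m₂₃; m₃₀, m₃₁, m₃₂, m₃₃]).submatrix
        Fin.interleave Fin.interleave =
      fromBlocks !![m₀₀, m₀₂; m₂₀, m₂₂] !![m₀₁, m₀₃; m₂₁, m₂₃]
        !![m₁₀, m₁₂; m₃₀, m₃₂] !![m₁₁, m₁₃; m₃₁, m₃₃] := by
  ext (i | i) (j | j) <;> fin_cases i <;> fin_cases j <;> rfl

theorem stmt_15 (η₁ ζ₁ ζ₂ a₂ a₄ c₂ c₄ : ℂ) (h : η₁ ^ 2 + ζ₁ * ζ₂ = 0)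
    (T₁ T₂ : Matrix (Fin 4) (Fin 4) ℂ)
    (hT₁ : T₁ = !![1, 1, 0, 0; 0, 1, 0, 0; 0, 0, 1, 1; 0, 0, 0, 1])
    (hT₂ : T₂ = !![η₁ + 1, a₂, ζ₂, a₄; 0, η₁ + 1, 0, ζ₂;
      ζ₁, c₂, 1 - η₁, c₄; 0, ζ₁, 0, 1 - η₁]) :
    Matrix.charpoly (T₁ * T₂) = (X - 1) ^ 4 := by
  set A : Matrix (Fin 2) (Fin 2) ℂ := !![η₁ + 1, ζ₂; ζ₁, 1 - η₁]
  have hT₁_blocks : T₁.submatrix Fin.interleave Fin.interleave = fromBlocks 1 1 0 1 := by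
    rw [hT₁, submatrix_interleave, one_fin_two]
    exact congrArg (fromBlocks _ _ · _) (eta_fin_two 0).symm
  have hT₂_blocks :
      T₂.submatrix Fin.interleave Fin.interleave = fromBlocks A !![a₂, a₄; c₂, c₄] 0 A := by
    rw [hT₂, submatrix_interleave]
    exact congrArg (fromBlocks _ _ · _) (eta_fin_two 0).symm
  have hA : A.charpoly = (X - 1) ^ 2 := by
    refine charpoly_eq_X_sub_one_sq ?_ ?_
    · rw [trace_fin_two_of]
      ring
    · rw [det_fin_two_of]
      linear_combination -h
  rw [← charpoly_reindex Fin.interleave.symm, reindex_apply, Equiv.symm_symm,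
    ← submatrix_mul_equiv _ _ _ Fin.interleave, hT₁_blocks, hT₂_blocks, fromBlocks_multiply]
  simp only [one_mul, zero_mul, add_zero, zero_add]
  rw [charpoly_fromBlocks_zero₂₁, hA]
  ring
end

section
/- Let δ = x₂ ∂/∂x₁ + x₄ ∂/∂x₃ act on the field of rational functions ℂ(x₁, x₂, x₃, x₄). If J is a rational function with δJ = 0 and ∂J/∂x₁ ≠ 0 or ∂J/∂x₃ ≠ 0, then J can be written as a rational function of Y₁ = x₂, Y₂ = x₄, Y₃ = x₄x₁ − x₂x₃ which genuinely depends on Y₃ (i.e., ∂/∂Y₃ of this representation is nonzero). -/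
open MvPolynomial

/-- The derivation δ = x₂ ∂/∂x₁ + x₄ ∂/∂x₃ on polynomials in x₁,…,x₄
(variables indexed 0,…,3). -/
noncomputable def deltaOp (p : MvPolynomial (Fin 4) ℂ) : MvPolynomial (Fin 4) ℂ :=
  X 1 * pderiv 0 p + X 3 * pderiv 2 p

/-- Substitution of Y₁ = x₂, Y₂ = x₄, Y₃ = x₄x₁ − x₂x₃ into a rational expression
in three variables, at the level of polynomials. -/
noncomputable def subY : MvPolynomial (Fin 3) ℂ →ₐ[ℂ] MvPolynomial (Fin 4) ℂ :=
  aeval ![X 1, X 3, X 3 * X 0 - X 1 * X 2]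

/-!
In the coordinates `(x₁, x₂, x₄, Y₃)` the derivation `δ` becomes `x₂ ∂/∂x₁`, since `δ` kills
`x₂`, `x₄` and `Y₃`. This change of coordinates is invertible once `x₂` is inverted, so after
multiplying by a power of `x₂` an invariant quotient `f/g` becomes a quotient `F/G` in the new
coordinates with `∂(F/G)/∂x₁ = 0`. In characteristic zero a univariate quotient with vanishing
derivative is constant (in lowest terms, the Wronskian of coprime polynomials vanishes only for
constants), so `F/G` does not involve `x₁`, i.e. `f/g = K(Y₁, Y₂, Y₃)`. Finally `∂/∂x₁` and
`∂/∂x₃` of `K(Y₁, Y₂, Y₃)` are multiples of `∂K/∂Y₃`, so `K` must depend on `Y₃`.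
-/

namespace MvPolynomial

theorem derivation_aeval {R σ A M : Type*} [CommSemiring R] [CommSemiring A] [Algebra R A]
    [AddCommMonoid M] [Module A M] [Module R M] [Fintype σ] (D : Derivation R A M)
    (g : σ → A) (p : MvPolynomial σ R) :
    D (aeval g p) = ∑ j, aeval g (pderiv j p) • D (g j) := by
  classical
  induction p using MvPolynomial.induction_on with
  | C a => simp [← algebraMap_eq]
  | add p q hp hq => simp only [map_add, hp, hq, add_smul, Finset.sum_add_distrib]
  | mul_X p i hp =>
    simp only [map_mul, aeval_X, D.leibniz, hp, Finset.smul_sum, smul_smul, mul_comm (g i)]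
    simp [Pi.single_apply, apply_ite, ite_smul, add_smul, Finset.sum_add_distrib, mul_comm]

variable {R : Type*} [CommSemiring R] {n : ℕ}

theorem finSuccEquiv_pderiv_zero (p : MvPolynomial (Fin (n + 1)) R) :
    finSuccEquiv R n (pderiv 0 p) = Polynomial.derivative (finSuccEquiv R n p) := by
  induction p using MvPolynomial.induction_on with
  | C a => simp [finSuccEquiv_apply]
  | add p q hp hq => simp [hp, hq]
  | mul_X p i hp =>
    have hX : finSuccEquiv R n (pderiv 0 (X i)) =
        Polynomial.derivative (finSuccEquiv R n (X i)) := by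
      cases i using Fin.cases with
      | zero => simp [finSuccEquiv_X_zero]
      | succ j => simp [finSuccEquiv_X_succ]
    rw [pderiv_mul, map_add, map_mul, map_mul, hp, hX, map_mul, Polynomial.derivative_mul]

theorem finSuccEquiv_rename_succ (p : MvPolynomial (Fin n) R) :
    finSuccEquiv R n (rename Fin.succ p) = Polynomial.C p := by
  induction p using MvPolynomial.induction_on with
  | C a => simp [finSuccEquiv_apply]
  | add p q hp hq => simp [hp, hq]
  | mul_X p i hp =>
    rw [map_mul, map_mul, hp, rename_X, finSuccEquiv_X_succ, Polynomial.C_mul]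

end MvPolynomial

theorem Derivation.wronskian_mul_sq_eq_of_mul_eq {R A : Type*} [CommSemiring R] [CommRing A]
    [Algebra R A] (D : Derivation R A A) {f g a b : A} (h : f * b = g * a) :
    (D f * g - f * D g) * b ^ 2 = g ^ 2 * (D a * b - a * D b) := by
  have hD := congrArg D h
  simp only [D.leibniz, smul_eq_mul] at hD
  linear_combination (g * b) * hD - (D g * b + g * D b) * h

namespace Polynomial

theorem wronskian_map {R S : Type*} [CommRing R] [CommRing S] (f : R →+* S) (p q : R[X]) :
    wronskian (p.map f) (q.map f) = (wronskian p q).map f := by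
  simp only [wronskian, derivative_map, Polynomial.map_mul, Polynomial.map_sub]

theorem exists_eq_C_mul_of_wronskian_eq_zero {K : Type*} [Field K] [CharZero K] {p q : K[X]}
    (hq : q ≠ 0) (hw : wronskian p q = 0) : ∃ c, p = C c * q := by
  classical
  obtain ⟨p', q', hp, hq', hu⟩ := extract_gcd p q
  set d := gcd p q
  have hd : d ≠ 0 := fun h => hq (by rw [hq', h, zero_mul])
  have hcop : IsCoprime p' q' := (gcd_isUnit_iff_isRelPrime.mp hu).isCoprime
  have hw' : wronskian p' q' = 0 := by
    have : wronskian p q = d ^ 2 * wronskian p' q' := by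
      rw [hp, hq']; simp only [wronskian, derivative_mul]; ring
    simpa [this, hd] using hw
  obtain ⟨hp', hq''⟩ := hcop.wronskian_eq_zero_iff.mp hw'
  rw [derivative_eq_zero] at hp' hq''
  rw [eq_C_of_natDegree_eq_zero hp'] at hp
  rw [eq_C_of_natDegree_eq_zero hq''] at hq'
  have hb : q'.coeff 0 ≠ 0 := fun h => hq (by rw [hq', h, C_0, mul_zero])
  refine ⟨p'.coeff 0 / q'.coeff 0, ?_⟩
  rw [hp, hq', mul_left_comm, ← C_mul, div_mul_cancel₀ _ hb]

theorem exists_mul_C_eq_mul_C_of_wronskian_eq_zero {S : Type*} [CommRing S] [IsDomain S]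
    [CharZero S] {p q : S[X]} (hq : q ≠ 0) (hw : wronskian p q = 0) :
    ∃ a b : S, b ≠ 0 ∧ p * C b = q * C a := by
  let ι := algebraMap S (FractionRing S)
  have hι : Function.Injective ι := IsFractionRing.injective S (FractionRing S)
  have hmap : Function.Injective (map ι) := map_injective ι hι
  have : CharZero (FractionRing S) := charZero_of_injective_algebraMap hι
  obtain ⟨c, hc⟩ := exists_eq_C_mul_of_wronskian_eq_zero (p := p.map ι) (q := q.map ι)
    ((Polynomial.map_ne_zero_iff hι).mpr hq) (by rw [wronskian_map, hw, Polynomial.map_zero])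
  obtain ⟨a, b, hb, rfl⟩ := IsFractionRing.div_surjective (A := S) c
  have hb0 : b ≠ 0 := nonZeroDivisors.ne_zero hb
  refine ⟨a, b, hb0, hmap ?_⟩
  simp only [Polynomial.map_mul, map_C, hc]
  rw [mul_right_comm, ← C_mul, div_mul_cancel₀ _ ((map_ne_zero_iff _ hι).mpr hb0), mul_comm]

end Polynomial

theorem MvPolynomial.exists_mul_rename_succ_eq_of_pderiv_zero {R : Type*} [CommRing R]
    [IsDomain R] [CharZero R] {n : ℕ} {F G : MvPolynomial (Fin (n + 1)) R} (hG : G ≠ 0)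
    (h : pderiv 0 F * G = F * pderiv 0 G) :
    ∃ u v : MvPolynomial (Fin n) R, v ≠ 0 ∧ F * rename Fin.succ v = G * rename Fin.succ u := by
  set e := finSuccEquiv R n
  have hw : Polynomial.wronskian (e F) (e G) = 0 := by
    rw [Polynomial.wronskian, ← finSuccEquiv_pderiv_zero, ← finSuccEquiv_pderiv_zero,
      ← map_mul, ← map_mul, h, sub_self]
  obtain ⟨u, v, hv, huv⟩ := Polynomial.exists_mul_C_eq_mul_C_of_wronskian_eq_zero
    ((map_ne_zero_iff _ e.injective).mpr hG) hw
  refine ⟨u, v, hv, e.injective ?_⟩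
  rw [map_mul, map_mul, finSuccEquiv_rename_succ, finSuccEquiv_rename_succ, huv]

/-- The change of coordinates to `(x₁, x₂, x₄, Y₃)`. -/
noncomputable def theta : MvPolynomial (Fin 4) ℂ →ₐ[ℂ] MvPolynomial (Fin 4) ℂ :=
  aeval ![X 0, X 1, X 3, X 3 * X 0 - X 1 * X 2]

theorem theta_rename_succ (p : MvPolynomial (Fin 3) ℂ) : theta (rename Fin.succ p) = subY p := by
  rw [theta, subY, aeval_rename]
  congr 1

theorem theta_injective : Function.Injective theta := by
  let ι := algebraMap (MvPolynomial (Fin 4) ℂ) (FractionRing (MvPolynomial (Fin 4) ℂ))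
  have hι : Function.Injective ι := IsFractionRing.injective _ _
  have hX : ι (X 1) ≠ 0 := (map_ne_zero_iff _ hι).mpr (X_ne_zero 1)
  let thetaInv : MvPolynomial (Fin 4) ℂ →ₐ[ℂ] FractionRing (MvPolynomial (Fin 4) ℂ) :=
    aeval ![ι (X 0), ι (X 1), (ι (X 2) * ι (X 0) - ι (X 3)) / ι (X 1), ι (X 2)]
  have hinv : thetaInv.comp theta = IsScalarTower.toAlgHom ℂ _ _ := by
    apply MvPolynomial.algHom_ext
    intro i
    fin_cases i <;> simp [thetaInv, theta, ι, mul_div_cancel₀ _ hX]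
  intro p q hpq
  apply hι
  have := congrArg thetaInv hpq
  rwa [← AlgHom.comp_apply, ← AlgHom.comp_apply, hinv] at this

theorem subY_injective : Function.Injective subY := by
  intro p q h
  apply rename_injective Fin.succ (Fin.succ_injective 3)
  apply theta_injective
  rwa [theta_rename_succ, theta_rename_succ]

theorem theta_X_one : theta (X 1) = X 1 := by simp [theta]

theorem exists_X_one_pow_mul_mem_range_theta (p : MvPolynomial (Fin 4) ℂ) :
    ∃ n, X 1 ^ n * p ∈ theta.range := by
  have hX : (X 1 : MvPolynomial (Fin 4) ℂ) ∈ theta.range := ⟨X 1, theta_X_one⟩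
  induction p using MvPolynomial.induction_on with
  | C a => exact ⟨0, by simpa using theta.range.algebraMap_mem a⟩
  | add p q hp hq =>
    obtain ⟨n, hn⟩ := hp
    obtain ⟨m, hm⟩ := hq
    refine ⟨n + m, ?_⟩
    have : X 1 ^ (n + m) * (p + q) = X 1 ^ m * (X 1 ^ n * p) + X 1 ^ n * (X 1 ^ m * q) := by ring
    rw [this]
    exact add_mem (mul_mem (pow_mem hX m) hn) (mul_mem (pow_mem hX n) hm)
  | mul_X p i hp =>
    obtain ⟨n, hn⟩ := hp
    -- `x₂ x₃ = x₄ x₁ - Y₃` is the only generator needing the factor `x₂`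
    have hXi : X 1 * X i ∈ theta.range := by
      fin_cases i
      · exact ⟨X 1 * X 0, by simp [theta]⟩
      · exact ⟨X 1 * X 1, by simp [theta]⟩
      · exact ⟨X 2 * X 0 - X 3, by simp [theta]⟩
      · exact ⟨X 1 * X 2, by simp [theta]⟩
    refine ⟨n + 1, ?_⟩
    rw [show X 1 ^ (n + 1) * (p * X i) = X 1 ^ n * p * (X 1 * X i) by ring]
    exact mul_mem hn hXi

theorem exists_theta_eq_X_one_pow_mul (f g : MvPolynomial (Fin 4) ℂ) :
    ∃ N F G, theta F = X 1 ^ N * f ∧ theta G = X 1 ^ N * g := by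
  obtain ⟨n, F, hF : theta F = X 1 ^ n * f⟩ := exists_X_one_pow_mul_mem_range_theta f
  obtain ⟨m, G, hG : theta G = X 1 ^ m * g⟩ := exists_X_one_pow_mul_mem_range_theta g
  refine ⟨n + m, X 1 ^ m * F, X 1 ^ n * G, ?_, ?_⟩
  · rw [map_mul, map_pow, theta_X_one, hF]; ring
  · rw [map_mul, map_pow, theta_X_one, hG]; ring

noncomputable def delta : Derivation ℂ (MvPolynomial (Fin 4) ℂ) (MvPolynomial (Fin 4) ℂ) :=
  (X 1 : MvPolynomial (Fin 4) ℂ) • pderiv 0 + (X 3 : MvPolynomial (Fin 4) ℂ) • pderiv 2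

theorem delta_apply (p : MvPolynomial (Fin 4) ℂ) : delta p = deltaOp p := rfl

theorem delta_theta (q : MvPolynomial (Fin 4) ℂ) : delta (theta q) = X 1 * theta (pderiv 0 q) := by
  rw [theta, derivation_aeval, Fin.sum_univ_four]
  simp [delta, pderiv_X, mul_comm]

theorem delta_X_one_pow_mul (N : ℕ) (p : MvPolynomial (Fin 4) ℂ) :
    delta (X 1 ^ N * p) = X 1 ^ N * delta p := by
  have hX : delta (X 1) = 0 := by simp [delta, pderiv_X]
  simp [Derivation.leibniz, Derivation.leibniz_pow, hX]

theorem pderiv_zero_mul_eq_of_deltaOp_mul_eq {N : ℕ} {f g F G : MvPolynomial (Fin 4) ℂ}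
    (hF : theta F = X 1 ^ N * f) (hG : theta G = X 1 ^ N * g)
    (h : deltaOp f * g = f * deltaOp g) :
    pderiv 0 F * G = F * pderiv 0 G := by
  apply theta_injective
  apply mul_left_cancel₀ (X_ne_zero 1 : (X 1 : MvPolynomial (Fin 4) ℂ) ≠ 0)
  calc X 1 * theta (pderiv 0 F * G)
      = delta (theta F) * theta G := by rw [map_mul, delta_theta, mul_assoc]
    _ = X 1 ^ N * X 1 ^ N * (deltaOp f * g) := by
      rw [hF, hG, delta_X_one_pow_mul, delta_apply]; ring
    _ = X 1 ^ N * X 1 ^ N * (f * deltaOp g) := by rw [h]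
    _ = theta F * delta (theta G) := by rw [hF, hG, delta_X_one_pow_mul, delta_apply]; ring
    _ = X 1 * theta (F * pderiv 0 G) := by rw [map_mul, delta_theta]; ring

theorem pderiv_subY {i : Fin 4} (h1 : i ≠ 1) (h3 : i ≠ 3) (p : MvPolynomial (Fin 3) ℂ) :
    pderiv i (subY p) = subY (pderiv 2 p) * pderiv i (X 3 * X 0 - X 1 * X 2) := by
  rw [subY, derivation_aeval, Fin.sum_univ_three]
  simp [pderiv_X_of_ne h1.symm, pderiv_X_of_ne h3.symm]

theorem pderiv_subY_mul_sub {i : Fin 4} (h1 : i ≠ 1) (h3 : i ≠ 3) (u v : MvPolynomial (Fin 3) ℂ) :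
    pderiv i (subY u) * subY v - subY u * pderiv i (subY v) =
      subY (pderiv 2 u * v - u * pderiv 2 v) * pderiv i (X 3 * X 0 - X 1 * X 2) := by
  rw [pderiv_subY h1 h3, pderiv_subY h1 h3, map_sub subY, map_mul subY, map_mul subY]
  ring

theorem stmt_18 (f g : MvPolynomial (Fin 4) ℂ) (hg : g ≠ 0)
    -- J = f/g satisfies δJ = 0 (quotient rule form):
    (hδ : deltaOp f * g - f * deltaOp g = 0)
    -- ∂J/∂x₁ ≠ 0 or ∂J/∂x₃ ≠ 0:
    (hdep : pderiv 0 f * g - f * pderiv 0 g ≠ 0 ∨ pderiv 2 f * g - f * pderiv 2 g ≠ 0) :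
    -- J = K(Y₁,Y₂,Y₃) for a rational function K = u/v which genuinely depends on Y₃:
    ∃ u v : MvPolynomial (Fin 3) ℂ, v ≠ 0 ∧ subY v ≠ 0 ∧
      f * subY v = g * subY u ∧
      pderiv 2 u * v - u * pderiv 2 v ≠ 0 := by
  obtain ⟨N, F, G, hF, hG⟩ := exists_theta_eq_X_one_pow_mul f g
  have hXN : (X 1 : MvPolynomial (Fin 4) ℂ) ^ N ≠ 0 := pow_ne_zero _ (X_ne_zero 1)
  have hG0 : G ≠ 0 := by
    rintro rfl
    exact hg ((mul_eq_zero.mp (by rw [← hG, map_zero])).resolve_left hXN)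
  obtain ⟨u, v, hv, huv⟩ := exists_mul_rename_succ_eq_of_pderiv_zero hG0
    (pderiv_zero_mul_eq_of_deltaOp_mul_eq hF hG (sub_eq_zero.mp hδ))
  have hfg : f * subY v = g * subY u := by
    have := congrArg theta huv
    rw [map_mul, map_mul, theta_rename_succ, theta_rename_succ, hF, hG] at this
    exact mul_left_cancel₀ hXN (by linear_combination this)
  have hsv : subY v ≠ 0 := (map_ne_zero_iff _ subY_injective).mpr hv
  refine ⟨u, v, hv, hsv, hfg, fun hW => ?_⟩
  have hJ : ∀ i : Fin 4, i ≠ 1 → i ≠ 3 → pderiv i f * g - f * pderiv i g = 0 := by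
    intro i h1 h3
    have := (pderiv i).wronskian_mul_sq_eq_of_mul_eq hfg
    rw [pderiv_subY_mul_sub h1 h3, hW, map_zero, zero_mul, mul_zero] at this
    exact (mul_eq_zero.mp this).resolve_right (pow_ne_zero 2 hsv)
  rcases hdep with h | h
  · exact h (hJ 0 (by decide) (by decide))
  · exact h (hJ 2 (by decide) (by decide))
end
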